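/- The function D₀(x) = y − ln(1 + y), where y = 7/(324 x³(35x² + 33)), is strictly decreasing on the interval (1, ∞); equivalently, its derivative with respect to x equals −(49/324)(175x² + 99) / (x⁴(35x² + 33)²(11340x⁵ + 10692x³ + 7)), which is negative for x > 1. -/

import Mathlib

noncomputable def D₀ (x : ℝ) : ℝ :=
  7 / (324 * x ^ 3 * (35 * x ^ 2 + 33))
    - Real.log (1 + 7 / (324 * x ^ 3 * (35 * x ^ 2 + 33)))

/-! Write `D₀ = φ ∘ (7 / q)` with `φ t = t - log (1 + t)` and `q x = 324 x³ (35 x² + 33)`.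
Since `φ' t = t / (1 + t)`, the chain rule gives `D₀' = -49 q' / (q² (q + 7))`, which is the stated
formula and is negative for `x > 0` because `q, q' > 0` there. -/

open Real Set

lemma hasDerivAt_sub_log_one_add {t : ℝ} (ht : 1 + t ≠ 0) :
    HasDerivAt (fun s => s - log (1 + s)) (t / (1 + t)) t := by
  refine ((hasDerivAt_id t).sub (((hasDerivAt_id t).const_add 1).log ht)).congr_deriv ?_
  simp only [id, one_div]
  field_simp
  ring

lemma D₀_hasDerivAt {x : ℝ} (hx : 0 < x) :
    HasDerivAt D₀ (-(49 / 324) * ((175 * x ^ 2 + 99) /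
      (x ^ 4 * (35 * x ^ 2 + 33) ^ 2 * (11340 * x ^ 5 + 10692 * x ^ 3 + 7)))) x := by
  have hq : HasDerivAt (fun x : ℝ => 324 * x ^ 3 * (35 * x ^ 2 + 33))
      (324 * x ^ 2 * (175 * x ^ 2 + 99)) x := by
    refine (((hasDerivAt_pow 3 x).const_mul 324).mul
      (((hasDerivAt_pow 2 x).const_mul 35).add_const 33)).congr_deriv ?_
    norm_num
    ring
  have hq_pos : 0 < 324 * x ^ 3 * (35 * x ^ 2 + 33) := by positivity
  have hy := (hasDerivAt_const x (7 : ℝ)).div hq hq_pos.ne'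
  have hy_pos : 0 < 1 + 7 / (324 * x ^ 3 * (35 * x ^ 2 + 33)) := by positivity
  refine ((hasDerivAt_sub_log_one_add hy_pos.ne').comp x hy).congr_deriv ?_
  field_simp
  ring

lemma D₀_deriv_neg {x : ℝ} (hx : 0 < x) : deriv D₀ x < 0 := by
  rw [(D₀_hasDerivAt hx).deriv, neg_mul]
  exact neg_neg_of_pos (by positivity)

lemma D₀_strictAntiOn : StrictAntiOn D₀ (Ioi 0) := by
  refine strictAntiOn_of_deriv_neg (convex_Ioi 0)
    (fun x hx => (D₀_hasDerivAt hx).continuousAt.continuousWithinAt) ?_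
  rw [interior_Ioi]
  exact fun x hx => D₀_deriv_neg hx

theorem D₀_strictly_decreasing :
    StrictAntiOn D₀ (Set.Ioi (1 : ℝ)) ∧
    ∀ x : ℝ, 1 < x →
      deriv D₀ x = -(49 / 324) * ((175 * x ^ 2 + 99) /
        (x ^ 4 * (35 * x ^ 2 + 33) ^ 2 * (11340 * x ^ 5 + 10692 * x ^ 3 + 7))) ∧
      deriv D₀ x < 0 := by
  refine ⟨D₀_strictAntiOn.mono (Ioi_subset_Ioi zero_le_one), fun x hx => ?_⟩
  have hx₀ : 0 < x := zero_lt_one.trans hx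
  exact ⟨(D₀_hasDerivAt hx₀).deriv, D₀_deriv_neg hx₀⟩
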